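/- Let (X,d) be an ultra-metric space, fix x₀ ∈ X, and extend d to X̄ = X ∪ X⁻¹ ∪ {e} by setting d(x,e) = max{d(x,x₀), 1} for x ∈ X, d(x⁻¹,y⁻¹) = d(x,y) and d(x⁻¹,y) = d(x,y⁻¹) = max{d(x,e), d(y,e)} for all x,y ∈ X ∪ {e}. Let δ_u be the associated Graev ultra-metric on F(X). Then for every 0 < ε < 1, the open ball B_{δ_u}(e,ε) = {w ∈ F(X) : δ_u(w,e) < ε} equals the subgroup [Ẽ] of F(X) generated by Ẽ, where E = {(x,y) ∈ X × X : d(x,y) < ε}. -/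

import Mathlib

/-! Graev ultra-metrics on free groups (after Gao, Savchenko–Zarichnyi and
Shlossberg, "On Graev type ultra-metrics"). -/

namespace GraevStmt

variable {X : Type*}

/-- The alphabet `X̄ = X ∪ X⁻¹ ∪ {e}`: `none` is the letter `e`,
`some (x, true)` is the letter `x` and `some (x, false)` is the letter `x⁻¹`. -/
abbrev Letter (X : Type*) := Option (X × Bool)

/-- The letter `e`. -/
def eL : Letter X := none

/-- The letter `x`, for `x ∈ X`. -/
def pos (x : X) : Letter X := some (x, true)

/-- The letter `x⁻¹`, for `x ∈ X`. -/
def neg (x : X) : Letter X := some (x, false)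

/-- The formal inverse of a letter; `e⁻¹ = e` and `(x⁻¹)⁻¹ = x`. -/
def linv : Letter X → Letter X
  | none => none
  | some (x, b) => some (x, !b)

/-- Interpretation of a letter as an element of the free group `F(X)`. -/
def toF : Letter X → FreeGroup X
  | none => 1
  | some (x, b) => FreeGroup.mk [(x, b)]

/-- The reduced word of a word `w ∈ W(X)` over the alphabet `X̄`, viewed as the
corresponding element of the free group `F(X)`. -/
def red (w : List (Letter X)) : FreeGroup X := (w.map toF).prod

/-- The canonical irreducible word over the alphabet `X̄` representing a given
element of the free group `F(X)`. -/
def wordOf [DecidableEq X] (w : FreeGroup X) : List (Letter X) :=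
  w.toWord.map some

/-- `ρ_u(w, v)`: the maximum of the distances between corresponding letters of
two words of equal length. -/
def rho (d : Letter X → Letter X → ℝ) (w v : List (Letter X)) : ℝ :=
  (List.zipWith d w v).foldr max 0

/-- The Graev ultra-metric `δ_u` on `F(X)` associated with `d`:
`δ_u(w, v) = inf {ρ_u(w*, v*) : lh(w*) = lh(v*), (w*)' = w, (v*)' = v}`. -/
noncomputable def graev (d : Letter X → Letter X → ℝ) (w v : FreeGroup X) : ℝ :=
  sInf {r : ℝ | ∃ w' v' : List (Letter X), w'.length = v'.length ∧
    red w' = w ∧ red v' = v ∧ r = rho d w' v'}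

/-- `d` is an ultra-metric: symmetric, vanishing exactly on the diagonal and
satisfying the strong triangle inequality. -/
def IsUltraMetric {A : Type*} (d : A → A → ℝ) : Prop :=
  (∀ a b, d a b = d b a) ∧ (∀ a b, d a b = 0 ↔ a = b) ∧
    ∀ a b c, d a c ≤ max (d a b) (d b c)

/-- An admissible ultra-metric on the alphabet `X̄`, i.e. an ultra-metric with
`d(x⁻¹, y⁻¹) = d(x, y)`, `d(x, e) = d(x⁻¹, e)` and `d(x⁻¹, y) = d(x, y⁻¹)`. -/
def IsAdmissible (d : Letter X → Letter X → ℝ) : Prop :=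
  IsUltraMetric d ∧ (∀ x y : X, d (neg x) (neg y) = d (pos x) (pos y)) ∧
    (∀ x : X, d (pos x) eL = d (neg x) eL) ∧
    ∀ x y : X, d (neg x) (pos y) = d (pos x) (neg y)

/-- A function `R` on `F(X) × F(X)` is (two-sided) invariant if
`R(uwv, uw'v) = R(w, w')` for all `u, v, w, w'`. -/
def IsInvariant (R : FreeGroup X → FreeGroup X → ℝ) : Prop :=
  ∀ u v w w' : FreeGroup X, R (u * w * v) (u * w' * v) = R w w'

/-- A match on `{0, …, n-1}`: an involution `θ` such that there are no
`i < j < θ(i) < θ(j)`. -/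
def IsMatch {n : ℕ} (θ : Fin n → Fin n) : Prop :=
  (∀ i, θ (θ i) = i) ∧ ∀ i j : Fin n, ¬(i < j ∧ j < θ i ∧ θ i < θ j)

/-- The word `w^θ` associated with a word `w` and a match `θ`:
its `i`-th letter is `x_i` if `θ(i) > i`, `e` if `θ(i) = i`, and
`x_{θ(i)}⁻¹` if `θ(i) < i`. -/
def matchWord (w : List (Letter X)) (θ : Fin w.length → Fin w.length) :
    List (Letter X) :=
  List.ofFn fun i => if i < θ i then w.get i
    else if θ i = i then eL else linv (w.get (θ i))

/-- `j₂(x, y) = x⁻¹y`. -/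
def j2 (p : X × X) : FreeGroup X := (FreeGroup.of p.1)⁻¹ * FreeGroup.of p.2

/-- `j₂*(x, y) = xy⁻¹`. -/
def j2s (p : X × X) : FreeGroup X := FreeGroup.of p.1 * (FreeGroup.of p.2)⁻¹

/-- `ε̃ = ⋃_{w ∈ F(X)} w (j₂(ε) ∪ j₂*(ε)) w⁻¹` for `ε ⊆ X × X`. -/
def tilde (S : Set (X × X)) : Set (FreeGroup X) :=
  ⋃ w : FreeGroup X, (fun g => w * g * w⁻¹) '' (j2 '' S ∪ j2s '' S)

/-- The extension of an ultra-metric `d` on `X` to the alphabet `X̄` determined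
by a base point `x₀`: `d(x, e) = max {d(x, x₀), 1}`, `d(x⁻¹, y⁻¹) = d(x, y)`
and `d(x⁻¹, y) = d(x, y⁻¹) = max {d(x, e), d(y, e)}` for `x, y ∈ X ∪ {e}`. -/
def ext (d : X → X → ℝ) (x₀ : X) : Letter X → Letter X → ℝ
  | none, none => 0
  | some (x, _), none => max (d x x₀) 1
  | none, some (y, _) => max (d y x₀) 1
  | some (x, true), some (y, true) => d x y
  | some (x, false), some (y, false) => d x y
  | some (x, _), some (y, _) => max (max (d x x₀) 1) (max (d y x₀) 1)

/-- The extension of an ultra-metric `d` of diameter at most `1` on `X` to the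
alphabet `X̄`, with `d(x⁻¹, y⁻¹) = d(x, y)` and
`d(x⁻¹, y) = d(x, y⁻¹) = d(x, e) = d(x⁻¹, e) = 1`. -/
def extOne (d : X → X → ℝ) : Letter X → Letter X → ℝ
  | none, none => 0
  | some (x, true), some (y, true) => d x y
  | some (x, false), some (y, false) => d x y
  | _, _ => 1

/-- The homomorphism `α : F(X) → ℤ` extending the constant map `X → {1} ⊆ ℤ`. -/
def alpha (w : FreeGroup X) : ℤ :=
  Multiplicative.toAdd ((FreeGroup.lift fun _ : X => Multiplicative.ofAdd (1 : ℤ)) w)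

/-- `F(q_r) : F(X) → F(X/F_r)`, where `X/F_r` is the quotient of `X` by the
partition into open balls of radius `r` (for an ultra-metric the relation
`d x y < r` is an equivalence relation, so `Quot` of this relation is exactly
this quotient) and `q_r` is the quotient map. -/
def Fq (d : X → X → ℝ) (r : ℝ) :
    FreeGroup X →* FreeGroup (Quot fun x y : X => d x y < r) :=
  FreeGroup.map (Quot.mk _)

/-- The Savchenko–Zarichnyi function `d̂` on `F(X) × F(X)`:
`d̂(v, w) = 1` if `α(v) ≠ α(w)`, and
`d̂(v, w) = inf {r > 0 : F(q_r)(v) = F(q_r)(w)}` if `α(v) = α(w)`. -/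
noncomputable def dHat (d : X → X → ℝ) (v w : FreeGroup X) : ℝ :=
  if alpha v = alpha w then sInf {r : ℝ | 0 < r ∧ Fq d r v = Fq d r w} else 1

/-! ### Auxiliary lemmas -/

section Aux

open List

lemma foldr_max_nonneg (l : List ℝ) : (0:ℝ) ≤ l.foldr max 0 := by
  induction l with
  | nil => simp
  | cons a l ih => exact le_trans ih (le_max_right _ _)

lemma le_foldr_max {l : List ℝ} {x : ℝ} (h : x ∈ l) : x ≤ l.foldr max 0 := by
  induction l with
  | nil => cases h
  | cons a l ih =>
    rcases List.mem_cons.1 h with rfl | h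
    · exact le_max_left _ _
    · exact le_trans (ih h) (le_max_right _ _)

lemma foldr_max_lt {l : List ℝ} {c : ℝ} (hc : 0 < c) (h : ∀ x ∈ l, x < c) :
    l.foldr max 0 < c := by
  induction l with
  | nil => simpa
  | cons a l ih => exact max_lt (h a (.head _)) (ih fun x hx => h x (.tail _ hx))

lemma foldr_max_append (l₁ l₂ : List ℝ) :
    (l₁ ++ l₂).foldr max 0 = max (l₁.foldr max 0) (l₂.foldr max 0) := by
  induction l₁ with
  | nil =>
    rw [List.nil_append, List.foldr_nil]
    exact (max_eq_right (foldr_max_nonneg l₂)).symm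
  | cons a l ih => simp [List.foldr_cons, ih, max_assoc]

lemma foldr_max_reverse (l : List ℝ) : l.reverse.foldr max 0 = l.foldr max 0 := by
  induction l with
  | nil => rfl
  | cons a l ih =>
    rw [List.reverse_cons, foldr_max_append, ih]
    simp only [List.foldr_cons, List.foldr_nil]
    rcases le_total a 0 with h | h
    · rw [max_eq_right h, max_eq_left (foldr_max_nonneg l),
        max_eq_right (h.trans (foldr_max_nonneg l))]
    · rw [max_eq_left h, max_comm]

lemma zipWith_eq_map_zip {α β γ : Type*} (f : α → β → γ) :
    ∀ (l₁ : List α) (l₂ : List β),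
    List.zipWith f l₁ l₂ = (List.zip l₁ l₂).map fun p => f p.1 p.2
  | [], _ => by simp
  | _ :: _, [] => by simp
  | a :: l₁, b :: l₂ => by simp [zipWith_eq_map_zip f l₁ l₂]

lemma forall₂_append_right {α β : Type*} {R : α → β → Prop} :
    ∀ {M₁ M₂ : List β} {L : List α}, List.Forall₂ R L (M₁ ++ M₂) →
      ∃ L₁ L₂, L = L₁ ++ L₂ ∧ List.Forall₂ R L₁ M₁ ∧ List.Forall₂ R L₂ M₂ := by
  intro M₁
  induction M₁ with
  | nil => exact fun {M₂ L} h => ⟨[], L, rfl, List.Forall₂.nil, h⟩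
  | cons b M₁ ih =>
    intro M₂ L h
    rw [List.cons_append, List.forall₂_cons_right_iff] at h
    obtain ⟨a, u, hab, hu, rfl⟩ := h
    obtain ⟨L₁, L₂, rfl, h₁, h₂⟩ := ih hu
    exact ⟨a :: L₁, L₂, rfl, List.Forall₂.cons hab h₁, h₂⟩

/-! #### Lemmas about `red` -/

lemma red_append (l₁ l₂ : List (Letter X)) : red (l₁ ++ l₂) = red l₁ * red l₂ := by
  simp [red]

lemma red_eq_mk (l : List (Letter X)) : red l = FreeGroup.mk (l.filterMap id) := by
  induction l with
  | nil => simp [red]; exact FreeGroup.one_eq_mk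
  | cons a l ih =>
    cases a with
    | none => simpa [red, toF] using ih
    | some p =>
      simp only [red, List.map_cons, List.prod_cons, toF, List.filterMap_cons_some, id]
      rw [← red, ih, FreeGroup.mul_mk, List.singleton_append]
      simp

lemma red_map_some (L : List (X × Bool)) : red (L.map some) = FreeGroup.mk L := by
  rw [red_eq_mk]
  congr 1
  induction L with
  | nil => rfl
  | cons a l ih => simp [ih]

lemma red_replicate_none (n : ℕ) :
    red (List.replicate n (eL : Letter X)) = 1 := by
  set_option linter.unnecessarySimpa false in
  induction n with
  | zero => simp [red]
  | succ n ih => simpa [red, List.replicate_succ, toF, eL] using ih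

lemma toF_linv (a : Letter X) : toF (linv a) = (toF a)⁻¹ := by
  cases a with
  | none => simp [linv, toF]
  | some p =>
    obtain ⟨x, b⟩ := p
    simp [linv, toF, FreeGroup.inv_mk, FreeGroup.invRev]

lemma red_reverse_map_linv (l : List (Letter X)) :
    red ((l.map linv).reverse) = (red l)⁻¹ := by
  induction l with
  | nil => simp [red]
  | cons a l ih =>
    rw [List.map_cons, List.reverse_cons, red_append, ih]
    simp [red, toF_linv, mul_inv_rev]

/-! #### Lemmas about `graev` -/

/-- The defining set of `graev`. -/
def GSet (d : Letter X → Letter X → ℝ) (w v : FreeGroup X) : Set ℝ :=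
  {r : ℝ | ∃ w' v' : List (Letter X), w'.length = v'.length ∧
    red w' = w ∧ red v' = v ∧ r = rho d w' v'}

lemma graev_eq_sInf (d : Letter X → Letter X → ℝ) (w v : FreeGroup X) :
    graev d w v = sInf (GSet d w v) := rfl

lemma gset_bddBelow (d : Letter X → Letter X → ℝ) (w v : FreeGroup X) :
    BddBelow (GSet d w v) := by
  refine ⟨0, fun r hr => ?_⟩
  obtain ⟨w', v', -, -, -, rfl⟩ := hr
  exact foldr_max_nonneg _

lemma gset_nonempty (d : Letter X → Letter X → ℝ) (w v : FreeGroup X) :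
    (GSet d w v).Nonempty := by
  classical
  refine ⟨_, w.toWord.map some ++ List.replicate v.toWord.length eL,
    List.replicate w.toWord.length eL ++ v.toWord.map some, ?_, ?_, ?_, rfl⟩
  · simp [add_comm]
  · rw [red_append, red_map_some, red_replicate_none, FreeGroup.mk_toWord, mul_one]
  · rw [red_append, red_map_some, red_replicate_none, FreeGroup.mk_toWord, one_mul]

lemma graev_le {d : Letter X → Letter X → ℝ} {w v : FreeGroup X} {r : ℝ}
    (hr : r ∈ GSet d w v) : graev d w v ≤ r :=
  csInf_le (gset_bddBelow d w v) hr

lemma exists_of_graev_lt {d : Letter X → Letter X → ℝ} {w v : FreeGroup X} {c : ℝ}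
    (h : graev d w v < c) :
    ∃ w' v' : List (Letter X), w'.length = v'.length ∧
      red w' = w ∧ red v' = v ∧ rho d w' v' < c := by
  obtain ⟨r, hr, hrc⟩ := exists_lt_of_csInf_lt (gset_nonempty d w v) h
  obtain ⟨w', v', h₁, h₂, h₃, rfl⟩ := hr
  exact ⟨w', v', h₁, h₂, h₃, hrc⟩

end Aux


section Main

open List

variable {d : X → X → ℝ} {x₀ : X} {ε : ℝ}

lemma um_nonneg (hd : IsUltraMetric d) (a b : X) : 0 ≤ d a b := by
  have h0 : d a a = 0 := (hd.2.1 a a).2 rfl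
  have := hd.2.2 a b a
  rw [h0, hd.1 b a, max_self] at this
  linarith

lemma ext_self (hd : IsUltraMetric d) (a : Letter X) : ext d x₀ a a = 0 := by
  rcases a with _ | ⟨x, _ | _⟩
  · rfl
  · exact (hd.2.1 x x).2 rfl
  · exact (hd.2.1 x x).2 rfl

lemma ext_linv (a b : Letter X) :
    ext d x₀ (linv a) (linv b) = ext d x₀ a b := by
  rcases a with _ | ⟨x, _ | _⟩ <;> rcases b with _ | ⟨y, _ | _⟩ <;> rfl

/-- The letter-wise relation induced by `d` and `ε`. -/
def LRel (d : X → X → ℝ) (ε : ℝ) : Letter X → Letter X → Prop := fun a b =>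
  (a = none ∧ b = none) ∨
    ∃ x y bl, a = some (x, bl) ∧ b = some (y, bl) ∧ d x y < ε

lemma pattern (hε1 : ε < 1) {a b : Letter X}
    (h : ext d x₀ a b < ε) : LRel d ε a b := by
  have h1 : ext d x₀ a b < 1 := h.trans hε1
  rcases a with _ | ⟨x, _ | _⟩ <;> rcases b with _ | ⟨y, _ | _⟩
  · exact Or.inl ⟨rfl, rfl⟩
  · exact absurd h1 (not_lt.2 (le_max_right (d y x₀) 1))
  · exact absurd h1 (not_lt.2 (le_max_right (d y x₀) 1))
  · exact absurd h1 (not_lt.2 (le_max_right (d x x₀) 1))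
  · exact Or.inr ⟨x, y, false, rfl, rfl, h⟩
  · exact absurd h1 (not_lt.2
      ((le_max_right (d x x₀) 1).trans (le_max_left _ _)))
  · exact absurd h1 (not_lt.2 (le_max_right (d x x₀) 1))
  · exact absurd h1 (not_lt.2
      ((le_max_right (d x x₀) 1).trans (le_max_left _ _)))
  · exact Or.inr ⟨x, y, true, rfl, rfl, h⟩

lemma forall₂_of_rho_lt {D : Letter X → Letter X → ℝ} {w v : List (Letter X)}
    (hlen : w.length = v.length) (h : rho D w v < ε) :
    List.Forall₂ (fun a b => D a b < ε) w v := by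
  rw [List.forall₂_iff_zip]
  refine ⟨hlen, fun {a b} hab => ?_⟩
  have hmem : D a b ∈ List.zipWith D w v := by
    rw [zipWith_eq_map_zip]
    exact List.mem_map_of_mem hab
  exact lt_of_le_of_lt (le_foldr_max hmem) h

/-- The relation on `X × Bool` induced by `d` and `ε`. -/
def PRel (d : X → X → ℝ) (ε : ℝ) : X × Bool → X × Bool → Prop :=
  fun a b => a.2 = b.2 ∧ d a.1 b.1 < ε

lemma filter_forall₂ {w v : List (Letter X)}
    (h : List.Forall₂ (LRel d ε) w v) :
    List.Forall₂ (PRel d ε) (w.filterMap id) (v.filterMap id) := by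
  induction h with
  | nil => exact List.Forall₂.nil
  | cons hab _ ih =>
    rcases hab with ⟨rfl, rfl⟩ | ⟨x, y, bl, rfl, rfl, hxy⟩
    · simpa using ih
    · have hp : PRel d ε (x, bl) (y, bl) := ⟨rfl, hxy⟩
      simpa using List.Forall₂.cons hp ih

lemma mem_tilde_conj {S : Set (X × X)} (u g : FreeGroup X)
    (hg : g ∈ j2 '' S ∪ j2s '' S) : u * g * u⁻¹ ∈ tilde S :=
  Set.mem_iUnion.2 ⟨u, g, hg, rfl⟩

lemma mk_singleton_inv (x : X) (b : Bool) :
    (FreeGroup.mk [(x, b)])⁻¹ = FreeGroup.mk [(x, !b)] := by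
  rw [FreeGroup.inv_mk]
  simp [FreeGroup.invRev]

lemma mk_pair_cancel (x : X) (b : Bool) :
    FreeGroup.mk [(x, b), (x, !b)] = 1 := by
  rw [← List.singleton_append, ← FreeGroup.mul_mk, ← mk_singleton_inv,
    mul_inv_cancel]

lemma j2_eq_mk (x y : X) :
    j2 (x, y) = FreeGroup.mk [(x, false), (y, true)] := by
  have : (FreeGroup.of x)⁻¹ = FreeGroup.mk [(x, false)] := mk_singleton_inv x true
  rw [j2, this, FreeGroup.of, FreeGroup.mul_mk]
  rfl

lemma j2s_eq_mk (x y : X) :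
    j2s (x, y) = FreeGroup.mk [(x, true), (y, false)] := by
  have : (FreeGroup.of y)⁻¹ = FreeGroup.mk [(y, false)] := mk_singleton_inv y true
  rw [j2s, this, FreeGroup.of, FreeGroup.mul_mk]
  rfl

lemma mk_pair_mem {y z : X} (b : Bool) (hyz : d y z < ε) :
    FreeGroup.mk [(y, b), (z, !b)] ∈
      j2 '' {p : X × X | d p.1 p.2 < ε} ∪ j2s '' {p : X × X | d p.1 p.2 < ε} := by
  cases b
  · exact Or.inl ⟨(y, z), hyz, (j2_eq_mk y z).symm⟩
  · exact Or.inr ⟨(y, z), hyz, (j2s_eq_mk y z).symm⟩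

lemma reduce_eq_or_decomp [DecidableEq X] : ∀ M : List (X × Bool),
    (∃ (M₁ M₂ : List (X × Bool)) (x : X) (b : Bool), M = M₁ ++ (x, b) :: (x, !b) :: M₂) ∨
      FreeGroup.reduce M = M := by
  intro M
  induction M with
  | nil => exact Or.inr rfl
  | cons a M ih =>
    rcases ih with ⟨M₁, M₂, x, b, rfl⟩ | hred
    · exact Or.inl ⟨a :: M₁, M₂, x, b, rfl⟩
    · cases M with
      | nil => exact Or.inr rfl
      | cons c M' =>
        by_cases hc : a.1 = c.1 ∧ a.2 = !c.2
        · refine Or.inl ⟨[], M', a.1, a.2, ?_⟩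
          obtain ⟨x, b⟩ := a
          obtain ⟨x', b'⟩ := c
          obtain ⟨h1, h2⟩ := hc
          simp only at h1 h2
          subst h1; subst h2
          simp
        · right
          rw [FreeGroup.reduce.cons, hred]
          simp [hc]

lemma eq_nil_of_mk_eq_one [DecidableEq X] {M : List (X × Bool)}
    (hM : FreeGroup.mk M = 1) (hr : FreeGroup.reduce M = M) : M = [] := by
  have h := FreeGroup.toWord_mk (L₁ := M)
  rw [hM, FreeGroup.toWord_one, hr] at h
  exact h.symm

lemma key (hd : IsUltraMetric d) :
    ∀ n (M L : List (X × Bool)), M.length = n →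
      List.Forall₂ (PRel d ε) L M → FreeGroup.mk M = 1 →
      FreeGroup.mk L ∈ Subgroup.closure (tilde {p : X × X | d p.1 p.2 < ε}) := by
  intro n
  induction n using Nat.strong_induction_on with
  | _ n ih =>
  intro M L hn hF hM
  classical
  rcases reduce_eq_or_decomp M with ⟨M₁, M₂, x, b, rfl⟩ | hred
  · obtain ⟨L₁, L', rfl, h₁, h'⟩ := forall₂_append_right hF
    rw [List.forall₂_cons_right_iff] at h'
    obtain ⟨p, L'', hp, h'', rfl⟩ := h'
    rw [List.forall₂_cons_right_iff] at h''
    obtain ⟨q, L₂, hq, h₂, rfl⟩ := h''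
    obtain ⟨y, b1⟩ := p
    obtain ⟨z, b2⟩ := q
    obtain ⟨hb1, hy⟩ := hp
    obtain ⟨hb2, hz⟩ := hq
    simp only [PRel] at hb1 hb2 hy hz
    subst hb1; subst hb2
    have hMM : FreeGroup.mk (M₁ ++ M₂) = 1 := by
      have hsplit : FreeGroup.mk (M₁ ++ (x, b1) :: (x, !b1) :: M₂)
          = FreeGroup.mk M₁ * FreeGroup.mk [(x, b1), (x, !b1)] * FreeGroup.mk M₂ := by
        rw [FreeGroup.mul_mk, FreeGroup.mul_mk, List.append_assoc]
        rfl
      rw [hsplit, mk_pair_cancel, mul_one, FreeGroup.mul_mk] at hM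
      exact hM
    have hlen : (M₁ ++ M₂).length < n := by
      subst hn; simp
    have hrest := ih _ hlen (M₁ ++ M₂) (L₁ ++ L₂) rfl (List.rel_append h₁ h₂) hMM
    have hdyz : d y z < ε := by
      refine lt_of_le_of_lt (hd.2.2 y x z) (max_lt hy ?_)
      rw [hd.1 x z]; exact hz
    have hg := mk_pair_mem (ε := ε) b1 hdyz
    have hsplitL : FreeGroup.mk (L₁ ++ (y, b1) :: (z, !b1) :: L₂)
        = (FreeGroup.mk L₁ * FreeGroup.mk [(y, b1), (z, !b1)] * (FreeGroup.mk L₁)⁻¹)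
          * FreeGroup.mk (L₁ ++ L₂) := by
      rw [← FreeGroup.mul_mk (L₁ := L₁) (L₂ := L₂)]
      have : FreeGroup.mk (L₁ ++ (y, b1) :: (z, !b1) :: L₂)
          = FreeGroup.mk L₁ * FreeGroup.mk [(y, b1), (z, !b1)] * FreeGroup.mk L₂ := by
        rw [FreeGroup.mul_mk, FreeGroup.mul_mk, List.append_assoc]
        rfl
      rw [this]
      group
    rw [hsplitL]
    exact Subgroup.mul_mem _
      (Subgroup.subset_closure (mem_tilde_conj (FreeGroup.mk L₁) _ hg)) hrest
  · have hMnil : M = [] := eq_nil_of_mk_eq_one hM hred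
    subst hMnil
    rw [List.forall₂_nil_right_iff] at hF
    subst hF
    rw [← FreeGroup.one_eq_mk]
    exact Subgroup.one_mem _

end Main


section Easy

open List

variable {d : X → X → ℝ} {x₀ : X} {ε : ℝ}

lemma ext_same_bool (x y : X) (bb : Bool) :
    ext d x₀ (some (y, bb)) (some (x, bb)) = d y x := by
  cases bb <;> rfl

lemma gen_lt (hd : IsUltraMetric d) (hε0 : 0 < ε)
    (u : FreeGroup X) (x y : X) (bb : Bool) (hxy : d x y < ε) :
    graev (ext d x₀) (u * FreeGroup.mk [(x, bb), (y, !bb)] * u⁻¹) 1 < ε := by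
  classical
  set A := u.toWord.map (some : X × Bool → Letter X) with hA
  set Ai := (u⁻¹).toWord.map (some : X × Bool → Letter X) with hAi
  have hmemb : rho (ext d x₀)
      (A ++ [(x, bb), (y, !bb)].map some ++ Ai)
      (A ++ [(x, bb), (x, !bb)].map some ++ Ai) ∈
      GSet (ext d x₀) (u * FreeGroup.mk [(x, bb), (y, !bb)] * u⁻¹) 1 := by
    refine ⟨_, _, by simp, ?_, ?_, rfl⟩
    · rw [red_append, red_append, red_map_some, red_map_some, red_map_some,
        FreeGroup.mk_toWord, FreeGroup.mk_toWord]
    · rw [red_append, red_append, red_map_some, red_map_some, red_map_some,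
        FreeGroup.mk_toWord, FreeGroup.mk_toWord, mk_pair_cancel, mul_one,
        mul_inv_cancel]
  refine lt_of_le_of_lt (graev_le hmemb) ?_
  rw [rho, List.zipWith_append (by simp),
    List.zipWith_append (by simp), foldr_max_append, foldr_max_append]
  have hself : ∀ l : List (Letter X),
      (List.zipWith (ext d x₀) l l).foldr max 0 < ε := by
    intro l
    rw [List.zipWith_self]
    refine foldr_max_lt hε0 ?_
    intro r hr
    obtain ⟨a, -, rfl⟩ := List.mem_map.1 hr
    rw [ext_self hd]
    exact hε0
  refine max_lt (max_lt (hself A) ?_) (hself Ai)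
  refine foldr_max_lt hε0 ?_
  intro r hr
  simp only [List.map_cons, List.map_nil, List.zipWith_cons_cons,
    List.zipWith_nil_right, List.zipWith_nil_left, List.mem_cons,
    List.not_mem_nil, or_false] at hr
  rcases hr with rfl | rfl
  · rw [ext_self hd]; exact hε0
  · rw [ext_same_bool, hd.1]
    exact hxy

end Easy

/-- Theorem `metgr` (1): for an ultra-metric space `(X, d)` with base point
`x₀` and the extension `ext d x₀` of `d` to `X̄`, for every `0 < ε < 1` the
open `δ_u`-ball `B_{δ_u}(e, ε)` equals the subgroup `[Ẽ]` generated by `Ẽ`,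
where `E = {(x, y) ∈ X × X : d(x, y) < ε}`. -/
theorem ball_graev_eq_closure_tilde {X : Type*} [Nonempty X]
    (d : X → X → ℝ) (hd : IsUltraMetric d) (x₀ : X)
    (ε : ℝ) (hε0 : 0 < ε) (hε1 : ε < 1) :
    {w : FreeGroup X | graev (ext d x₀) w 1 < ε} =
      (Subgroup.closure (tilde {p : X × X | d p.1 p.2 < ε}) :
        Set (FreeGroup X)) := by
  ext w
  simp only [Set.mem_setOf_eq, SetLike.mem_coe]
  constructor
  · intro hw
    obtain ⟨w', v', hlen, hw', hv', hr⟩ := exists_of_graev_lt hw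
    have hF : List.Forall₂ (LRel d ε) w' v' :=
      List.Forall₂.imp (fun a b h => pattern hε1 h) (forall₂_of_rho_lt hlen hr)
    rw [← hw', red_eq_mk]
    exact key hd _ _ _ rfl (filter_forall₂ hF) (by rw [← red_eq_mk, hv'])
  · intro hw
    refine Subgroup.closure_induction
      (p := fun g _ => graev (ext d x₀) g 1 < ε) ?_ ?_ ?_ ?_ hw
    · intro g hg
      obtain ⟨u, hu⟩ := Set.mem_iUnion.1 hg
      obtain ⟨g₀, hg₀, rfl⟩ := hu
      rcases hg₀ with ⟨p, hp, rfl⟩ | ⟨p, hp, rfl⟩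
      · have := gen_lt (x₀ := x₀) hd hε0 u p.1 p.2 false hp
        rw [j2_eq_mk p.1 p.2]
        simpa using this
      · have := gen_lt (x₀ := x₀) hd hε0 u p.1 p.2 true hp
        rw [j2s_eq_mk p.1 p.2]
        simpa using this
    · refine lt_of_le_of_lt (graev_le ⟨[], [], rfl, ?_, ?_, rfl⟩) hε0 <;>
        simp [red]
    · intro a b ha hb hpa hpb
      obtain ⟨wa, va, hl1, hwa, hva, hr1⟩ := exists_of_graev_lt hpa
      obtain ⟨wb, vb, hl2, hwb, hvb, hr2⟩ := exists_of_graev_lt hpb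
      refine lt_of_le_of_lt (graev_le ⟨wa ++ wb, va ++ vb, by simp [hl1, hl2],
        by rw [red_append, hwa, hwb], by rw [red_append, hva, hvb, one_mul],
        rfl⟩) ?_
      rw [rho, List.zipWith_append hl1, foldr_max_append]
      exact max_lt hr1 hr2
    · intro a ha hpa
      obtain ⟨wa, va, hl, hwa, hva, hr⟩ := exists_of_graev_lt hpa
      refine lt_of_le_of_lt (graev_le ⟨(wa.map linv).reverse, (va.map linv).reverse,
        by simp [hl], by rw [red_reverse_map_linv, hwa],
        by rw [red_reverse_map_linv, hva, inv_one], rfl⟩) ?_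
      rw [rho, ← List.reverse_zipWith (by simp [hl]), List.zipWith_map,
        foldr_max_reverse]
      have hfun : (fun a b => ext d x₀ (linv a) (linv b)) = ext d x₀ := by
        funext a b
        exact ext_linv a b
      rw [hfun]
      exact lt_of_le_of_lt (le_of_eq rfl) hr

end GraevStmt
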